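/- arXiv:1006.5415 — 3 statements merged into one kernel-verified Lean document; each statement's English description precedes it below -/
import Mathlib

section
/- Under hypothesis (i) (L is strictly increasing and r_i < ∫_Ω K_i(α) L(∞) dP(α) for all i, where L(∞) := lim_{x→+∞} L(x) ∈ (0, +∞]), every solution n(t) of the system dn_i/dt = [r_i − ∫_Ω K_i(α) L(Σ_{j=1}^N B_j(α) n_j(t)) dP(α)] n_i(t) with nonnegative initial data is uniformly bounded in time: there exists M > 0 such that ‖n(t)‖ ≤ M for all t ≥ 0. -/
/-!
Each equation is linear in `nᵢ` with a coefficient that is bounded on bounded time intervals, so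
Grönwall keeps solutions nonnegative. By monotone convergence, hypothesis (i) yields a threshold
`Rᵢ` with `rᵢ < ∫ Kᵢ L(Bᵢ Rᵢ) dP`. Once `nᵢ ≥ Rᵢ`, nonnegativity of the other components and
monotonicity of `L` make the competition felt by species `i` exceed `rᵢ`, so `nᵢ` cannot grow
past `max (nᵢ(0), Rᵢ)`.
-/

open MeasureTheory Filter Topology ENNReal Set

theorem nonneg_of_hasDerivAt_mul_self {f g : ℝ → ℝ}
    (hf : ∀ t, 0 ≤ t → HasDerivAt f (g t * f t) t)
    (hg : ∀ T, ∃ M, ∀ t ∈ Icc 0 T, |g t| ≤ M) (h0 : 0 ≤ f 0) :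
    ∀ t, 0 ≤ t → 0 ≤ f t := by
  intro t ht
  by_contra! hneg
  have hcont : ContinuousOn f (Icc 0 t) := fun s hs =>
    (hf s hs.1).continuousAt.continuousWithinAt
  obtain ⟨t₀, ht₀, hzero⟩ := intermediate_value_Icc' ht hcont ⟨hneg.le, h0⟩
  obtain ⟨M, hM⟩ := hg t
  have hvanish := eq_zero_of_abs_deriv_le_mul_abs_self_of_eq_zero_right (K := M)
    (hcont.mono (Icc_subset_Icc_left ht₀.1))
    (fun s hs => (hf s (ht₀.1.trans hs.1)).hasDerivWithinAt) hzero
    (fun s hs => by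
      rw [norm_mul, Real.norm_eq_abs]
      exact mul_le_mul_of_nonneg_right (hM s ⟨ht₀.1.trans hs.1, hs.2.le⟩) (norm_nonneg _))
    t ⟨ht₀.2, le_rfl⟩
  linarith

theorem le_max_of_hasDerivAt_nonpos_of_le {f f' : ℝ → ℝ} {R : ℝ}
    (hf : ∀ t, 0 ≤ t → HasDerivAt f (f' t) t) (hR : ∀ t, 0 ≤ t → R ≤ f t → f' t ≤ 0) :
    ∀ t, 0 ≤ t → f t ≤ max (f 0) R := by
  intro t ht
  set m := max (f 0) R
  have hfence : ∀ ε > 0, f t ≤ m + ε * t := fun ε hε =>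
    image_le_of_deriv_right_lt_deriv_boundary' (B := fun s => m + ε * s) (B' := fun _ => ε)
      (fun s hs => (hf s hs.1).continuousAt.continuousWithinAt)
      (fun s hs => (hf s hs.1).hasDerivWithinAt) (by simp [m]) (by fun_prop)
      (fun s _ => by simpa using (((hasDerivAt_id s).const_mul ε).const_add m).hasDerivWithinAt)
      (fun s hs hfs => (hR s hs.1 (by
        rw [hfs]; nlinarith [le_max_right (f 0) R, hs.1])).trans_lt hε)
      ⟨ht, le_rfl⟩
  have hlim : Tendsto (fun ε => m + ε * t) (𝓝[>] 0) (𝓝 m) := by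
    have : Tendsto (fun ε => m + ε * t) (𝓝 0) (𝓝 (m + 0 * t)) := by
      apply Continuous.tendsto; fun_prop
    simpa using this.mono_left nhdsWithin_le_nhds
  exact ge_of_tendsto hlim (eventually_nhdsWithin_of_forall hfence)

theorem pi_norm_le_of_nonneg_of_le {ι : Type*} [Fintype ι] {x y : ι → ℝ} (h0 : 0 ≤ x)
    (h : x ≤ y) : ‖x‖ ≤ ‖y‖ :=
  (pi_norm_le_iff_of_nonneg (norm_nonneg y)).2 fun i => by
    rw [Real.norm_of_nonneg (h0 i)]
    exact (h i).trans ((le_abs_self _).trans (norm_le_pi_norm y i))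

theorem Continuous.exists_abs_le_of_abs_le {L : ℝ → ℝ} (hL : Continuous L) (ρ : ℝ) :
    ∃ M, ∀ y, |y| ≤ ρ → |L y| ≤ M := by
  obtain ⟨M, hM⟩ :=
    (isCompact_Icc (a := -ρ) (b := ρ)).exists_bound_of_continuousOn hL.continuousOn
  exact ⟨M, fun y hy => hM y (abs_le.1 hy)⟩

theorem tendsto_ofReal_mul_comp_mul_natCast {L : ℝ → ℝ} {Linf : ℝ≥0∞}
    (hLinf : Tendsto (fun x => (L x : EReal)) atTop (𝓝 (Linf : EReal))) {k c : ℝ}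
    (hk : 0 ≤ k) (hc : 0 < c) :
    Tendsto (fun m : ℕ => ENNReal.ofReal (k * L (c * k * m))) atTop
      (𝓝 (ENNReal.ofReal k * Linf)) := by
  rcases hk.eq_or_lt with rfl | hk
  · simp
  have hL : Tendsto (fun x => ENNReal.ofReal (L x)) atTop (𝓝 Linf) := by
    simpa [Function.comp_def] using (EReal.continuous_toENNReal.tendsto _).comp hLinf
  simp_rw [ENNReal.ofReal_mul hk.le]
  exact ENNReal.Tendsto.const_mul
    (hL.comp (tendsto_natCast_atTop_atTop.const_mul_atTop (mul_pos hc hk))) (Or.inr ofReal_ne_top)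

section CompetitionRate

variable {Ω ι : Type*} [MeasurableSpace Ω] {P : Measure Ω} [Fintype ι]
  {K : Ω → ℝ} {L : ℝ → ℝ} {B : ι → Ω → ℝ}

noncomputable def competitionRate (P : Measure Ω) (K : Ω → ℝ) (L : ℝ → ℝ) (B : ι → Ω → ℝ)
    (x : ι → ℝ) : ℝ :=
  ∫ α, K α * L (∑ j, B j α * x j) ∂P

theorem exists_ae_abs_sum_mul_le (hB : ∀ j, MemLp (B j) ∞ P) :
    ∃ D, 0 ≤ D ∧ ∀ x : ι → ℝ, ∀ᵐ α ∂P, |∑ j, B j α * x j| ≤ D * ‖x‖ := by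
  refine ⟨∑ j, lpNorm (B j) ∞ P, Finset.sum_nonneg fun j _ => lpNorm_nonneg, fun x => ?_⟩
  filter_upwards [ae_all_iff.2 fun j => ae_le_lpNorm_exponent_top (hB j)] with α hα
  calc |∑ j, B j α * x j| ≤ ∑ j, |B j α| * |x j| := by
        simpa only [abs_mul] using Finset.abs_sum_le_sum_abs (fun j => B j α * x j) Finset.univ
    _ ≤ ∑ j, lpNorm (B j) ∞ P * ‖x‖ := Finset.sum_le_sum fun j _ =>
        mul_le_mul (by simpa using hα j) (by simpa using norm_le_pi_norm x j) (abs_nonneg _)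
          lpNorm_nonneg
    _ = (∑ j, lpNorm (B j) ∞ P) * ‖x‖ := (Finset.sum_mul ..).symm

theorem integrable_mul_comp_sum_mul (hL : Continuous L) (hK : Integrable K P)
    (hB : ∀ j, MemLp (B j) ∞ P) (x : ι → ℝ) :
    Integrable (fun α => K α * L (∑ j, B j α * x j)) P := by
  obtain ⟨D, -, hD⟩ := exists_ae_abs_sum_mul_le hB
  obtain ⟨M, hM⟩ := hL.exists_abs_le_of_abs_le (D * ‖x‖)
  refine hK.mul_bdd (hL.comp_aestronglyMeasurable ?_) ((hD x).mono fun α hα => hM _ hα)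
  exact Finset.aestronglyMeasurable_fun_sum _ fun j _ => (hB j).1.mul_const _

theorem exists_abs_competitionRate_le (hL : Continuous L) (hK : Integrable K P)
    (hB : ∀ j, MemLp (B j) ∞ P) (A : ℝ) :
    ∃ M, ∀ x, ‖x‖ ≤ A → |competitionRate P K L B x| ≤ M := by
  obtain ⟨D, hD0, hD⟩ := exists_ae_abs_sum_mul_le hB
  obtain ⟨M, hM⟩ := hL.exists_abs_le_of_abs_le (D * A)
  refine ⟨∫ α, M * |K α| ∂P, fun x hx => ?_⟩
  rw [← Real.norm_eq_abs]
  refine norm_integral_le_of_norm_le (hK.abs.const_mul M) ?_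
  filter_upwards [hD x] with α hα
  rw [norm_mul, Real.norm_eq_abs, Real.norm_eq_abs, mul_comm]
  gcongr
  exact hM _ (hα.trans (mul_le_mul_of_nonneg_left hx hD0))

theorem competitionRate_mono (hL : Continuous L) (hLmono : Monotone L) (hK : Integrable K P)
    (hK0 : ∀ α, 0 ≤ K α) (hB : ∀ j, MemLp (B j) ∞ P) (hB0 : ∀ j α, 0 ≤ B j α) :
    Monotone (competitionRate P K L B) := fun x y hxy =>
  integral_mono (integrable_mul_comp_sum_mul hL hK hB x) (integrable_mul_comp_sum_mul hL hK hB y)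
    fun α => mul_le_mul_of_nonneg_left
      (hLmono (Finset.sum_le_sum fun j _ => mul_le_mul_of_nonneg_left (hxy j) (hB0 j α))) (hK0 α)

theorem competitionRate_single [DecidableEq ι] (i : ι) (R : ℝ) :
    competitionRate P K L B (Pi.single i R) = ∫ α, K α * L (B i α * R) ∂P := by
  simp [competitionRate, Pi.single_apply]

theorem exists_lt_competitionRate_single [DecidableEq ι] (hL : Continuous L)
    (hLmono : Monotone L) (hLnonneg : ∀ x, 0 ≤ x → 0 ≤ L x) {Linf : ℝ≥0∞}
    (hLinf : Tendsto (fun x => (L x : EReal)) atTop (𝓝 (Linf : EReal)))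
    (hK : Integrable K P) (hK0 : ∀ α, 0 ≤ K α) (hB : ∀ j, MemLp (B j) ∞ P) {i : ι} {c : ℝ}
    (hc : 0 < c) (hBK : ∀ α, B i α = c * K α) {r : ℝ}
    (hr : (r : EReal) < ((∫⁻ α, ENNReal.ofReal (K α) * Linf ∂P : ℝ≥0∞) : EReal)) :
    ∃ R, r < competitionRate P K L B (Pi.single i R) := by
  simp_rw [competitionRate_single, hBK]
  have hint (m : ℕ) : Integrable (fun α => K α * L (c * K α * m)) P := by
    simpa [Pi.single_apply, hBK] using
      integrable_mul_comp_sum_mul hL hK hB (Pi.single i (m : ℝ))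
  have hnonneg (m : ℕ) (α : Ω) : 0 ≤ K α * L (c * K α * m) :=
    mul_nonneg (hK0 α) (hLnonneg _ (by have := hK0 α; positivity))
  have hmono : ∀ α, Monotone fun m : ℕ => ENNReal.ofReal (K α * L (c * K α * m)) :=
    fun α m m' hmm => ENNReal.ofReal_le_ofReal (mul_le_mul_of_nonneg_left
      (hLmono (mul_le_mul_of_nonneg_left (Nat.cast_le.2 hmm) (mul_nonneg hc.le (hK0 α)))) (hK0 α))
  have hMCT := lintegral_tendsto_of_tendsto_of_monotone
    (fun m => (hint m).aemeasurable.ennreal_ofReal) (ae_of_all _ hmono)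
    (ae_of_all _ fun α => tendsto_ofReal_mul_comp_mul_natCast hLinf (hK0 α) hc)
  -- comparing in `EReal` avoids a case split on the sign of `r`
  obtain ⟨m, hm⟩ := ((continuous_coe_ennreal_ereal.tendsto _).comp hMCT).eventually_const_lt hr
    |>.exists
  refine ⟨m, ?_⟩
  rwa [Function.comp_apply, ← ofReal_integral_eq_lintegral_ofReal (hint m)
    (ae_of_all _ (hnonneg m)), EReal.coe_ennreal_ofReal,
    max_eq_left (integral_nonneg (hnonneg m)), EReal.coe_lt_coe_iff] at hm

end CompetitionRate

theorem solutions_uniformly_bounded_general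
    {Ω : Type*} [MeasurableSpace Ω] (P : Measure Ω) {N : ℕ}
    (L : ℝ → ℝ) (hLC1 : ContDiff ℝ 1 L) (hLnonneg : ∀ x : ℝ, 0 ≤ x → 0 ≤ L x)
    (r : Fin N → ℝ) (K B : Fin N → Ω → ℝ)
    (hKnonneg : ∀ i α, 0 ≤ K i α) (hBnonneg : ∀ i α, 0 ≤ B i α)
    (hKL1 : ∀ i, Integrable (K i) P)
    (hBLinf : ∀ i, MemLp (B i) ⊤ P)
    (C : Fin N → ℝ) (hC : ∀ i, 0 < C i) (hBK : ∀ i α, B i α = C i * K i α)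
    -- (i) strict competition
    (hLmono : StrictMono L) (Linf : ℝ≥0∞)
    (hLinf : Tendsto (fun x => (L x : EReal)) atTop (𝓝 (Linf : EReal)))
    (hstrict : ∀ i, (r i : EReal) <
      ((∫⁻ α, ENNReal.ofReal (K i α) * Linf ∂P : ℝ≥0∞) : EReal))
    -- a solution with nonnegative initial data
    (n : ℝ → Fin N → ℝ) (h0 : ∀ i, 0 ≤ n 0 i)
    (hsol : ∀ t : ℝ, 0 ≤ t → ∀ i, HasDerivAt (fun s => n s i)
      ((r i - ∫ α, K i α * L (∑ j, B j α * n t j) ∂P) * n t i) t) :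
    ∃ M : ℝ, 0 < M ∧ ∀ t : ℝ, 0 ≤ t → ‖n t‖ ≤ M := by
  have hL : Continuous L := hLC1.continuous
  have hcont (T : ℝ) : ContinuousOn n (Icc 0 T) := continuousOn_pi.2 fun i t ht =>
    (hsol t ht.1 i).continuousAt.continuousWithinAt
  have hnonneg : ∀ t, 0 ≤ t → 0 ≤ n t := by
    intro t ht i
    refine nonneg_of_hasDerivAt_mul_self (fun s hs => hsol s hs i) (fun T => ?_) (h0 i) t ht
    obtain ⟨A, hA⟩ := isCompact_Icc.exists_bound_of_continuousOn (hcont T)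
    obtain ⟨M, hM⟩ := exists_abs_competitionRate_le hL (hKL1 i) hBLinf A
    exact ⟨|r i| + M, fun s hs => (abs_sub _ _).trans (add_le_add_right (hM _ (hA s hs)) _)⟩
  choose R hR using fun i => exists_lt_competitionRate_single hL hLmono.monotone hLnonneg hLinf
    (hKL1 i) (hKnonneg i) hBLinf (hC i) (hBK i) (hstrict i)
  have hle (i : Fin N) : ∀ t, 0 ≤ t → n t i ≤ max (n 0 i) (R i) := by
    refine le_max_of_hasDerivAt_nonpos_of_le (fun t ht => hsol t ht i) fun t ht hRt => ?_
    have hsingle : Pi.single i (R i) ≤ n t := fun j => by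
      rcases eq_or_ne j i with rfl | hj
      · simpa using hRt
      · simpa [hj] using hnonneg t ht j
    exact mul_nonpos_of_nonpos_of_nonneg (sub_nonpos.2 ((hR i).le.trans
      (competitionRate_mono hL hLmono.monotone (hKL1 i) (hKnonneg i) hBLinf hBnonneg hsingle)))
      (hnonneg t ht i)
  refine ⟨‖fun i => max (n 0 i) (R i)‖ + 1, by positivity, fun t ht => ?_⟩
  exact (pi_norm_le_of_nonneg_of_le (hnonneg t ht) fun i => hle i t ht).trans
    (le_add_of_nonneg_right zero_le_one)

/-- Under the strict competition hypothesis (i), every solution of the generalized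
competitive system with nonnegative initial data is uniformly bounded in time. -/
theorem solutions_uniformly_bounded
    {Ω : Type*} [MeasurableSpace Ω] (P : Measure Ω) {N : ℕ}
    (L : ℝ → ℝ) (hLC1 : ContDiff ℝ 1 L) (hLnonneg : ∀ x : ℝ, 0 ≤ x → 0 ≤ L x)
    (r : Fin N → ℝ) (K B : Fin N → Ω → ℝ)
    (hKnonneg : ∀ i α, 0 ≤ K i α) (hBnonneg : ∀ i α, 0 ≤ B i α)
    (hKL1 : ∀ i, Integrable (K i) P) (hKLinf : ∀ i, MemLp (K i) ⊤ P)
    (hBL1 : ∀ i, Integrable (B i) P) (hBLinf : ∀ i, MemLp (B i) ⊤ P)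
    (C : Fin N → ℝ) (hC : ∀ i, 0 < C i) (hBK : ∀ i α, B i α = C i * K i α)
    -- (i) strict competition
    (hLmono : StrictMono L) (Linf : ℝ≥0∞) (hLinfpos : 0 < Linf)
    (hLinf : Tendsto (fun x => (L x : EReal)) atTop (𝓝 (Linf : EReal)))
    (hstrict : ∀ i, (r i : EReal) <
      ((∫⁻ α, ENNReal.ofReal (K i α) * Linf ∂P : ℝ≥0∞) : EReal))
    -- a solution with nonnegative initial data
    (n : ℝ → Fin N → ℝ) (h0 : ∀ i, 0 ≤ n 0 i)
    (hsol : ∀ t : ℝ, 0 ≤ t → ∀ i, HasDerivAt (fun s => n s i)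
      ((r i - ∫ α, K i α * L (∑ j, B j α * n t j) ∂P) * n t i) t) :
    ∃ M : ℝ, 0 < M ∧ ∀ t : ℝ, 0 ≤ t → ‖n t‖ ≤ M :=
  solutions_uniformly_bounded_general P L hLC1 hLnonneg r K B hKnonneg hBnonneg hKL1 hBLinf C hC hBK
    hLmono Linf hLinf hstrict n h0 hsol
end

section
/- Assume L is strictly increasing and hypothesis (iv) holds. Then there is at most one Evolutionarily Stable Strategy: if n¹, n² ∈ ℝ_+^N both satisfy the ESS conditions (∫_Ω K_i(α) L(Σ_j B_j(α) n_j) dP(α) = r_i for every i with n_i > 0, and ∫_Ω K_i(α) L(Σ_j B_j(α) n_j) dP(α) ≥ r_i for every i with n_i = 0), then n¹ = n². -/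
open MeasureTheory Filter Topology ENNReal

/-!
Write `S = ∑ⱼ Bⱼ n¹ⱼ` and `T = ∑ⱼ Bⱼ n²ⱼ`. Since `Bⱼ = Cⱼ Kⱼ`,
`∫ (S - T) (L S - L T) dP = ∑ⱼ Cⱼ (n¹ⱼ - n²ⱼ) (Fⱼ(n¹) - Fⱼ(n²))`, where `Fⱼ(n) = ∫ Kⱼ L(∑ Bₖ nₖ) dP`.
Each summand is `≤ 0` by the ESS conditions, while the integrand is `≥ 0` because `L` is
increasing; hence the integrand vanishes a.e., so `S = T` a.e. by strict monotonicity, and the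
two ESS have the same fitness vector. Both then solve `rᵢ = Fᵢ(n)` on the union of their
supports, and (iv) identifies them. All integrals involved are finite because a monotone `L`
maps the essentially bounded `S`, `T` to essentially bounded functions.
-/

lemma Monotone.memLp_top_comp {α : Type*} [MeasurableSpace α] {μ : Measure α}
    {L : ℝ → ℝ} (hL : Monotone L) {f : α → ℝ} (hf : MemLp f ∞ μ) : MemLp (L ∘ f) ∞ μ := by
  obtain ⟨M, hM⟩ := eLpNormEssSup_lt_top_iff_isBoundedUnder.1
    (eLpNorm_exponent_top (f := f) ▸ hf.eLpNorm_lt_top)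
  refine memLp_top_of_bound (hL.measurable.comp_aemeasurable hf.1.aemeasurable).aestronglyMeasurable
    (max |L (-M)| |L M|) ?_
  filter_upwards [hM] with x hx
  obtain ⟨hlow, hup⟩ := abs_le.1 (show |f x| ≤ M from hx)
  exact abs_le_max_abs_abs (hL hlow) (hL hup)

lemma StrictMono.sub_mul_sub_pos {L : ℝ → ℝ} (hL : StrictMono L) {x y : ℝ} (h : x ≠ y) :
    0 < (x - y) * (L x - L y) := by
  rcases h.lt_or_gt with hxy | hxy
  · exact mul_pos_of_neg_of_neg (sub_neg.2 hxy) (sub_neg.2 (hL hxy))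
  · exact mul_pos (sub_pos.2 hxy) (sub_pos.2 (hL hxy))

lemma Monotone.sub_mul_sub_nonneg {L : ℝ → ℝ} (hL : Monotone L) (x y : ℝ) :
    0 ≤ (x - y) * (L x - L y) := by
  rcases le_total x y with hxy | hxy
  · exact mul_nonneg_of_nonpos_of_nonpos (sub_nonpos.2 hxy) (sub_nonpos.2 (hL hxy))
  · exact mul_nonneg (sub_nonneg.2 hxy) (sub_nonneg.2 (hL hxy))

lemma ae_eq_of_integral_sub_mul_sub_nonpos {α : Type*} [MeasurableSpace α] {μ : Measure α}
    {L : ℝ → ℝ} (hL : StrictMono L) {f g : α → ℝ}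
    (hint : Integrable (fun x => (f x - g x) * (L (f x) - L (g x))) μ)
    (hle : ∫ x, (f x - g x) * (L (f x) - L (g x)) ∂μ ≤ 0) : f =ᵐ[μ] g := by
  have hnonneg : 0 ≤ fun x => (f x - g x) * (L (f x) - L (g x)) :=
    fun x => hL.monotone.sub_mul_sub_nonneg (f x) (g x)
  have hzero : (fun x => (f x - g x) * (L (f x) - L (g x))) =ᵐ[μ] 0 :=
    (integral_eq_zero_iff_of_nonneg hnonneg hint).1 (le_antisymm hle (integral_nonneg hnonneg))
  filter_upwards [hzero] with x hx
  by_contra hne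
  exact (hL.sub_mul_sub_pos hne).ne' hx

section ESS

variable {ι : Type*}

def IsESS (F : (ι → ℝ) → ι → ℝ) (r n : ι → ℝ) : Prop :=
  ∀ i, 0 ≤ n i ∧ (0 < n i → F n i = r i) ∧ (n i = 0 → r i ≤ F n i)

variable {F : (ι → ℝ) → ι → ℝ} {r n m : ι → ℝ}

lemma IsESS.sub_mul_sub_nonpos (hn : IsESS F r n) (hm : IsESS F r m) (i : ι) :
    (n i - m i) * (F n i - F m i) ≤ 0 := by
  obtain ⟨hn0, hn_eq, hn_ge⟩ := hn i
  obtain ⟨hm0, hm_eq, hm_ge⟩ := hm i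
  rcases hn0.eq_or_lt with hni | hni <;> rcases hm0.eq_or_lt with hmi | hmi
  · simp [← hni, ← hmi]
  · exact mul_nonpos_of_nonpos_of_nonneg (by linarith) (by linarith [hn_ge hni.symm, hm_eq hmi])
  · exact mul_nonpos_of_nonneg_of_nonpos (by linarith) (by linarith [hn_eq hni, hm_ge hmi.symm])
  · simp [hn_eq hni, hm_eq hmi]

lemma IsESS.eq_of_fitness_eq [Fintype ι]
    (hnondeg : ∀ I : Finset ι, ∀ n m : ι → ℝ,
      (∀ i ∉ I, n i = 0) → (∀ i ∉ I, m i = 0) →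
      (∀ i ∈ I, r i = F n i) → (∀ i ∈ I, r i = F m i) → n = m)
    (hn : IsESS F r n) (hm : IsESS F r m) (hF : F n = F m) : n = m := by
  have hsupp : ∀ i, ¬(0 < n i ∨ 0 < m i) → n i = 0 ∧ m i = 0 := fun i hi => by
    simp only [not_or, not_lt] at hi
    exact ⟨le_antisymm hi.1 (hn i).1, le_antisymm hi.2 (hm i).1⟩
  have hsolve : ∀ i, 0 < n i ∨ 0 < m i → r i = F n i := by
    rintro i (hi | hi)
    · exact ((hn i).2.1 hi).symm
    · exact hF ▸ ((hm i).2.1 hi).symm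
  refine hnondeg {i | 0 < n i ∨ 0 < m i} n m ?_ ?_ ?_ ?_
  · exact fun i hi => (hsupp i (by simpa using hi)).1
  · exact fun i hi => (hsupp i (by simpa using hi)).2
  · exact fun i hi => hsolve i (by simpa using hi)
  · exact fun i hi => hF ▸ hsolve i (by simpa using hi)

end ESS

section Fitness

variable {Ω ι : Type*} [Fintype ι] {L : ℝ → ℝ} {K B : ι → Ω → ℝ} {C : ι → ℝ}

def weightedSum (B : ι → Ω → ℝ) (n : ι → ℝ) (α : Ω) : ℝ := ∑ j, B j α * n j

lemma weightedSum_sub_mul_sub_eq (hBK : ∀ i α, B i α = C i * K i α) (n m : ι → ℝ) (α : Ω) :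
    (weightedSum B n α - weightedSum B m α) * (L (weightedSum B n α) - L (weightedSum B m α)) =
      ∑ j, C j * (n j - m j) *
        (K j α * L (weightedSum B n α) - K j α * L (weightedSum B m α)) := by
  simp only [weightedSum, ← Finset.sum_sub_distrib, Finset.sum_mul, hBK]
  exact Finset.sum_congr rfl fun j _ => by ring

variable [MeasurableSpace Ω] {P : Measure Ω}

noncomputable def fitness (P : Measure Ω) (K B : ι → Ω → ℝ) (L : ℝ → ℝ) (n : ι → ℝ) (i : ι) : ℝ :=
  ∫ α, K i α * L (weightedSum B n α) ∂P

lemma memLp_top_weightedSum (hB : ∀ j, MemLp (B j) ∞ P) (n : ι → ℝ) :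
    MemLp (weightedSum B n) ∞ P :=
  memLp_finsetSum Finset.univ fun j _ => (hB j).mul_const (n j)

lemma integrable_mul_comp_weightedSum {i : ι} (hK : Integrable (K i) P) (hB : ∀ j, MemLp (B j) ∞ P)
    (hL : Monotone L) (n : ι → ℝ) :
    Integrable (fun α => K i α * L (weightedSum B n α)) P :=
  hK.mul_of_top_left (hL.memLp_top_comp (memLp_top_weightedSum hB n))

lemma fitness_eq_of_isESS (hK : ∀ i, Integrable (K i) P) (hB : ∀ i, MemLp (B i) ∞ P)
    (hC : ∀ i, 0 ≤ C i) (hBK : ∀ i α, B i α = C i * K i α) (hL : StrictMono L) {r n m : ι → ℝ}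
    (hn : IsESS (fitness P K B L) r n) (hm : IsESS (fitness P K B L) r m) :
    fitness P K B L n = fitness P K B L m := by
  have hint : ∀ (p : ι → ℝ) j, Integrable (fun α => K j α * L (weightedSum B p α)) P :=
    fun p j => integrable_mul_comp_weightedSum (hK j) hB hL.monotone p
  have hterm : ∀ j, Integrable (fun α => C j * (n j - m j) *
      (K j α * L (weightedSum B n α) - K j α * L (weightedSum B m α))) P :=
    fun j => ((hint n j).sub (hint m j)).const_mul _
  have hintegral : ∫ α, (weightedSum B n α - weightedSum B m α) *
      (L (weightedSum B n α) - L (weightedSum B m α)) ∂P =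
      ∑ j, C j * (n j - m j) * (fitness P K B L n j - fitness P K B L m j) := by
    simp only [weightedSum_sub_mul_sub_eq hBK, integral_finsetSum _ fun j _ => hterm j,
      integral_const_mul, integral_sub (hint n _) (hint m _), fitness]
  have hle : ∑ j, C j * (n j - m j) * (fitness P K B L n j - fitness P K B L m j) ≤ 0 :=
    Finset.sum_nonpos fun j _ => by
      rw [mul_assoc]
      exact mul_nonpos_of_nonneg_of_nonpos (hC j) (hn.sub_mul_sub_nonpos hm j)
  have hae : weightedSum B n =ᵐ[P] weightedSum B m := by
    refine ae_eq_of_integral_sub_mul_sub_nonpos hL ?_ (hintegral ▸ hle)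
    simpa only [weightedSum_sub_mul_sub_eq hBK] using integrable_finsetSum _ fun j _ => hterm j
  funext i
  exact integral_congr_ae (by filter_upwards [hae] with α hα using by rw [hα])

end Fitness

theorem ESS_unique_general
    {Ω : Type*} [MeasurableSpace Ω] (P : Measure Ω) {N : ℕ}
    (L : ℝ → ℝ)
    (r : Fin N → ℝ) (K B : Fin N → Ω → ℝ)
    (hKL1 : ∀ i, Integrable (K i) P)
    (hBLinf : ∀ i, MemLp (B i) ⊤ P)
    (C : Fin N → ℝ) (hC : ∀ i, 0 < C i) (hBK : ∀ i α, B i α = C i * K i α)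
    (hLmono : StrictMono L)
    -- (iv) non degeneracy
    (hnondeg : ∀ I : Finset (Fin N), ∀ n m : Fin N → ℝ,
      (∀ i ∉ I, n i = 0) → (∀ i ∉ I, m i = 0) →
      (∀ i ∈ I, r i = ∫ α, K i α * L (∑ j, B j α * n j) ∂P) →
      (∀ i ∈ I, r i = ∫ α, K i α * L (∑ j, B j α * m j) ∂P) →
      n = m)
    -- two ESS
    (n1 n2 : Fin N → ℝ) (hn1 : ∀ i, 0 ≤ n1 i) (hn2 : ∀ i, 0 ≤ n2 i)
    (hESS1eq : ∀ i, 0 < n1 i → ∫ α, K i α * L (∑ j, B j α * n1 j) ∂P = r i)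
    (hESS1ge : ∀ i, n1 i = 0 → r i ≤ ∫ α, K i α * L (∑ j, B j α * n1 j) ∂P)
    (hESS2eq : ∀ i, 0 < n2 i → ∫ α, K i α * L (∑ j, B j α * n2 j) ∂P = r i)
    (hESS2ge : ∀ i, n2 i = 0 → r i ≤ ∫ α, K i α * L (∑ j, B j α * n2 j) ∂P) :
    n1 = n2 := by
  have h1 : IsESS (fitness P K B L) r n1 := fun i => ⟨hn1 i, hESS1eq i, hESS1ge i⟩
  have h2 : IsESS (fitness P K B L) r n2 := fun i => ⟨hn2 i, hESS2eq i, hESS2ge i⟩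
  exact h1.eq_of_fitness_eq hnondeg h2
    (fitness_eq_of_isESS hKL1 hBLinf (fun i => (hC i).le) hBK hLmono h1 h2)

/-- If `L` is strictly increasing and the non degeneracy hypothesis (iv) holds, then there
is at most one Evolutionarily Stable Strategy in `ℝ_+^N`. -/
theorem ESS_unique
    {Ω : Type*} [MeasurableSpace Ω] (P : Measure Ω) {N : ℕ}
    (L : ℝ → ℝ) (hLC1 : ContDiff ℝ 1 L) (hLnonneg : ∀ x : ℝ, 0 ≤ x → 0 ≤ L x)
    (r : Fin N → ℝ) (K B : Fin N → Ω → ℝ)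
    (hKnonneg : ∀ i α, 0 ≤ K i α) (hBnonneg : ∀ i α, 0 ≤ B i α)
    (hKL1 : ∀ i, Integrable (K i) P) (hKLinf : ∀ i, MemLp (K i) ⊤ P)
    (hBL1 : ∀ i, Integrable (B i) P) (hBLinf : ∀ i, MemLp (B i) ⊤ P)
    (C : Fin N → ℝ) (hC : ∀ i, 0 < C i) (hBK : ∀ i α, B i α = C i * K i α)
    (hLmono : StrictMono L)
    -- (iv) non degeneracy
    (hnondeg : ∀ I : Finset (Fin N), ∀ n m : Fin N → ℝ,
      (∀ i ∉ I, n i = 0) → (∀ i ∉ I, m i = 0) →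
      (∀ i ∈ I, r i = ∫ α, K i α * L (∑ j, B j α * n j) ∂P) →
      (∀ i ∈ I, r i = ∫ α, K i α * L (∑ j, B j α * m j) ∂P) →
      n = m)
    -- two ESS
    (n1 n2 : Fin N → ℝ) (hn1 : ∀ i, 0 ≤ n1 i) (hn2 : ∀ i, 0 ≤ n2 i)
    (hESS1eq : ∀ i, 0 < n1 i → ∫ α, K i α * L (∑ j, B j α * n1 j) ∂P = r i)
    (hESS1ge : ∀ i, n1 i = 0 → r i ≤ ∫ α, K i α * L (∑ j, B j α * n1 j) ∂P)
    (hESS2eq : ∀ i, 0 < n2 i → ∫ α, K i α * L (∑ j, B j α * n2 j) ∂P = r i)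
    (hESS2ge : ∀ i, n2 i = 0 → r i ≤ ∫ α, K i α * L (∑ j, B j α * n2 j) ∂P) :
    n1 = n2 :=
  ESS_unique_general P L r K B hKL1 hBLinf C hC hBK hLmono hnondeg n1 n2 hn1 hn2 hESS1eq hESS1ge
    hESS2eq hESS2ge
end

section
/- Under hypotheses (i)-(iv), any steady state ñ ∈ ℝ_+^N of the system to which some solution with strictly positive initial data (n_i(0) > 0 for all i) converges must satisfy the ESS conditions: ∫_Ω K_i(α) L(Σ_{j=1}^N B_j(α) ñ_j) dP(α) = r_i for every i with ñ_i > 0, and ∫_Ω K_i(α) L(Σ_{j=1}^N B_j(α) ñ_j) dP(α) ≥ r_i for every i with ñ_i = 0. -/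
/-!
Along a solution each coordinate obeys the scalar linear equation `n_i' = g_i(t) n_i` with a
continuous rate `g_i(t) = r_i - ∫ K_i L(∑ B_j n_j(t))`, so by uniqueness for that equation a
coordinate that starts positive stays positive. If the limit `ñ` had `ñ_i = 0` but
`∫ K_i L(∑ B_j ñ_j) < r_i`, continuity of the competition integral (dominated convergence, the
`B_j` being essentially bounded) would make `g_i` eventually positive, so `n_i` would eventually
be increasing and positive, and could not tend to `0`.
-/

open MeasureTheory Filter Topology ENNReal Set

section ScalarLinearODE

variable {x g : ℝ → ℝ} {a b : ℝ}

theorem eqOn_zero_of_hasDerivAt_mul_self (hg : ContinuousOn g (Icc a b))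
    (hx : ∀ t ∈ Icc a b, HasDerivAt x (g t * x t) t) (hb : x b = 0) :
    EqOn x 0 (Icc a b) := by
  obtain ⟨C, hC⟩ := isCompact_Icc.exists_bound_of_continuousOn hg
  have hlip : ∀ t ∈ Ioc a b, LipschitzOnWith C.toNNReal (fun y => g t * y) univ := by
    refine fun t ht => (LipschitzWith.of_dist_le_mul fun y z => ?_).lipschitzOnWith
    rw [Real.dist_eq, Real.dist_eq, ← mul_sub, abs_mul, Real.coe_toNNReal']
    exact mul_le_mul_of_nonneg_right ((hC t (Ioc_subset_Icc_self ht)).trans (le_max_left _ _))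
      (abs_nonneg _)
  refine ODE_solution_unique_of_mem_Icc_left hlip
    (fun t ht => (hx t ht).continuousAt.continuousWithinAt)
    (fun t ht => (hx t (Ioc_subset_Icc_self ht)).hasDerivWithinAt) (fun _ _ => mem_univ _)
    continuousOn_const
    (fun t _ => by simpa [Pi.zero_def] using hasDerivWithinAt_const t (Iic t) (0 : ℝ))
    (fun _ _ => mem_univ _) hb

theorem pos_of_hasDerivAt_mul_self (hab : a ≤ b) (hg : ContinuousOn g (Icc a b))
    (hx : ∀ t ∈ Icc a b, HasDerivAt x (g t * x t) t) (ha : 0 < x a) : 0 < x b := by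
  by_contra! hb
  obtain ⟨c, hc, hxc⟩ : ∃ c ∈ Icc a b, x c = 0 :=
    intermediate_value_Icc' hab (fun t ht => (hx t ht).continuousAt.continuousWithinAt)
      ⟨hb, ha.le⟩
  have hsub : Icc a c ⊆ Icc a b := Icc_subset_Icc_right hc.2
  have := eqOn_zero_of_hasDerivAt_mul_self (hg.mono hsub) (fun t ht => hx t (hsub ht)) hxc
    (left_mem_Icc.2 hc.1)
  simp only [Pi.zero_apply] at this
  linarith

theorem not_tendsto_zero_of_hasDerivAt_mul_self (hg : ContinuousOn g (Ici a))
    (hx : ∀ t ∈ Ici a, HasDerivAt x (g t * x t) t) (ha : 0 < x a)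
    (hg_nonneg : ∀ᶠ t in atTop, 0 ≤ g t) : ¬Tendsto x atTop (𝓝 0) := by
  intro hlim
  have hpos : ∀ t ∈ Ici a, 0 < x t := fun t ht =>
    pos_of_hasDerivAt_mul_self ht (hg.mono Icc_subset_Ici_self) (fun s hs => hx s hs.1) ha
  obtain ⟨T, hT⟩ := eventually_atTop.1 (hg_nonneg.and (eventually_ge_atTop a))
  have hIci : Ici T ⊆ Ici a := Ici_subset_Ici.2 (hT T le_rfl).2
  have hmono : MonotoneOn x (Ici T) := by
    refine monotoneOn_of_hasDerivWithinAt_nonneg (convex_Ici T)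
      (fun t ht => (hx t (hIci ht)).continuousAt.continuousWithinAt)
      (fun t ht => (hx t (hIci (interior_subset ht))).hasDerivWithinAt) (fun t ht => ?_)
    have ht' : T ≤ t := interior_subset (s := Ici T) ht
    exact mul_nonneg (hT t ht').1 (hpos t (hIci ht')).le
  have hle : x T ≤ 0 := ge_of_tendsto hlim <|
    eventually_atTop.2 ⟨T, fun t ht => hmono self_mem_Ici ht ht⟩
  exact (hpos T (hT T le_rfl).2).not_ge hle

end ScalarLinearODE

section CompetitionIntegral

variable {Ω ι : Type*} [MeasurableSpace Ω] {P : Measure Ω} [Fintype ι] {B : ι → Ω → ℝ}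

theorem ae_abs_sum_mul_le (hB : ∀ j, MemLp (B j) ⊤ P) :
    ∀ᵐ α ∂P, ∀ x : ι → ℝ, |∑ j, B j α * x j| ≤ (∑ j, lpNorm (B j) ⊤ P) * ‖x‖ := by
  filter_upwards [ae_all_iff.2 fun j => ae_le_lpNorm_exponent_top (hB j)] with α hα x
  calc |∑ j, B j α * x j| ≤ ∑ j, |B j α| * |x j| := by
        simpa only [abs_mul] using Finset.abs_sum_le_sum_abs (fun j => B j α * x j) Finset.univ
    _ ≤ ∑ j, lpNorm (B j) ⊤ P * ‖x‖ := Finset.sum_le_sum fun j _ =>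
        mul_le_mul (hα j) (norm_le_pi_norm x j) (abs_nonneg _) lpNorm_nonneg
    _ = (∑ j, lpNorm (B j) ⊤ P) * ‖x‖ := (Finset.sum_mul ..).symm

theorem exists_ae_norm_mul_comp_sum_le {L : ℝ → ℝ} (hL : Continuous L) (k : Ω → ℝ)
    (hB : ∀ j, MemLp (B j) ⊤ P) (R : ℝ) :
    ∃ M, ∀ x : ι → ℝ, ‖x‖ ≤ R →
      ∀ᵐ α ∂P, ‖k α * L (∑ j, B j α * x j)‖ ≤ M * ‖k α‖ := by
  set c := (∑ j, lpNorm (B j) ⊤ P) * R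
  obtain ⟨M, hM⟩ := (isCompact_Icc (a := -c) (b := c)).exists_bound_of_continuousOn
    hL.continuousOn
  refine ⟨M, fun x hx => ?_⟩
  filter_upwards [ae_abs_sum_mul_le hB] with α hα
  have hsum : |∑ j, B j α * x j| ≤ c := (hα x).trans <|
    mul_le_mul_of_nonneg_left hx (Finset.sum_nonneg fun _ _ => lpNorm_nonneg)
  rw [norm_mul, mul_comm]
  exact mul_le_mul_of_nonneg_right (hM _ (abs_le.1 hsum)) (norm_nonneg _)

theorem continuous_integral_mul_comp_sum {L : ℝ → ℝ} (hL : Continuous L) {k : Ω → ℝ}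
    (hk : Integrable k P) (hB : ∀ j, MemLp (B j) ⊤ P) :
    Continuous fun x : ι → ℝ => ∫ α, k α * L (∑ j, B j α * x j) ∂P := by
  refine continuous_iff_continuousAt.2 fun x₀ => ?_
  obtain ⟨M, hM⟩ := exists_ae_norm_mul_comp_sum_le hL k hB (‖x₀‖ + 1)
  have hmeas : ∀ x : ι → ℝ, AEStronglyMeasurable (fun α => ∑ j, B j α * x j) P := fun x =>
    Finset.aestronglyMeasurable_fun_sum _ fun j _ => (hB j).1.mul_const (x j)
  refine continuousAt_of_dominated
    (Eventually.of_forall fun x => hk.1.mul (hL.comp_aestronglyMeasurable (hmeas x))) ?_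
    (hk.norm.const_mul M) (ae_of_all _ fun α => Continuous.continuousAt (by fun_prop))
  filter_upwards [Metric.closedBall_mem_nhds x₀ one_pos] with x hx
  exact hM x (norm_le_of_mem_closedBall hx)

end CompetitionIntegral

theorem limit_steady_state_is_ESS_general
    {Ω : Type*} [MeasurableSpace Ω] (P : Measure Ω) {N : ℕ}
    (L : ℝ → ℝ) (hLC1 : ContDiff ℝ 1 L)
    (r : Fin N → ℝ) (K B : Fin N → Ω → ℝ)
    (hKL1 : ∀ i, Integrable (K i) P)
    (hBLinf : ∀ i, MemLp (B i) ⊤ P)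
    -- a steady state
    (ntilde : Fin N → ℝ)
    (hsteady : ∀ i, (r i - ∫ α, K i α * L (∑ j, B j α * ntilde j) ∂P) * ntilde i = 0)
    -- to which some solution with strictly positive initial data converges
    (hconv : ∃ n : ℝ → Fin N → ℝ, (∀ i, 0 < n 0 i) ∧
      (∀ t : ℝ, 0 ≤ t → ∀ i, HasDerivAt (fun s => n s i)
        ((r i - ∫ α, K i α * L (∑ j, B j α * n t j) ∂P) * n t i) t) ∧
      Filter.Tendsto n Filter.atTop (𝓝 ntilde)) :
    (∀ i, 0 < ntilde i → ∫ α, K i α * L (∑ j, B j α * ntilde j) ∂P = r i) ∧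
    (∀ i, ntilde i = 0 → r i ≤ ∫ α, K i α * L (∑ j, B j α * ntilde j) ∂P) := by
  obtain ⟨n, hn₀, hn', hlim⟩ := hconv
  refine ⟨fun i hi => (sub_eq_zero.1 ((mul_eq_zero.1 (hsteady i)).resolve_right hi.ne')).symm,
    fun i hi => ?_⟩
  have hI := continuous_integral_mul_comp_sum hLC1.continuous (hKL1 i) hBLinf
  have hn : ContinuousOn n (Ici 0) := fun t ht =>
    (continuousAt_pi.2 fun j => (hn' t ht j).continuousAt).continuousWithinAt
  by_contra! hlt
  refine not_tendsto_zero_of_hasDerivAt_mul_self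
    (continuousOn_const.sub (hI.comp_continuousOn hn)) (fun t ht => hn' t ht i) (hn₀ i) ?_
    (hi ▸ tendsto_pi_nhds.1 hlim i)
  exact ((hI.tendsto ntilde).comp hlim).eventually (gt_mem_nhds hlt) |>.mono
    fun t ht => sub_nonneg.2 ht.le

/-- Under hypotheses (i)-(iv), any steady state `ñ ∈ ℝ_+^N` of the generalized competitive
system to which some solution with strictly positive initial data converges must satisfy
the ESS conditions. -/
theorem limit_steady_state_is_ESS
    {Ω : Type*} [MeasurableSpace Ω] (P : Measure Ω) {N : ℕ}
    (L : ℝ → ℝ) (hLC1 : ContDiff ℝ 1 L) (hLnonneg : ∀ x : ℝ, 0 ≤ x → 0 ≤ L x)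
    (r : Fin N → ℝ) (K B : Fin N → Ω → ℝ)
    (hKnonneg : ∀ i α, 0 ≤ K i α) (hBnonneg : ∀ i α, 0 ≤ B i α)
    (hKL1 : ∀ i, Integrable (K i) P) (hKLinf : ∀ i, MemLp (K i) ⊤ P)
    (hBL1 : ∀ i, Integrable (B i) P) (hBLinf : ∀ i, MemLp (B i) ⊤ P)
    -- (i) strict competition
    (hLmono : StrictMono L) (Linf : ℝ≥0∞) (hLinfpos : 0 < Linf)
    (hLinf : Tendsto (fun x => (L x : EReal)) atTop (𝓝 (Linf : EReal)))
    (hstrict : ∀ i, (r i : EReal) <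
      ((∫⁻ α, ENNReal.ofReal (K i α) * Linf ∂P : ℝ≥0∞) : EReal))
    -- (ii) symmetry
    (C : Fin N → ℝ) (hC : ∀ i, 0 < C i) (hBK : ∀ i α, B i α = C i * K i α)
    -- (iii) non extinction
    (hnonext : ∀ i, ∫ α, K i α * L 0 ∂P < r i)
    -- (iv) non degeneracy
    (hnondeg : ∀ I : Finset (Fin N), ∀ n m : Fin N → ℝ,
      (∀ i ∉ I, n i = 0) → (∀ i ∉ I, m i = 0) →
      (∀ i ∈ I, r i = ∫ α, K i α * L (∑ j, B j α * n j) ∂P) →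
      (∀ i ∈ I, r i = ∫ α, K i α * L (∑ j, B j α * m j) ∂P) →
      n = m)
    -- a steady state
    (ntilde : Fin N → ℝ) (hnt : ∀ i, 0 ≤ ntilde i)
    (hsteady : ∀ i, (r i - ∫ α, K i α * L (∑ j, B j α * ntilde j) ∂P) * ntilde i = 0)
    -- to which some solution with strictly positive initial data converges
    (hconv : ∃ n : ℝ → Fin N → ℝ, (∀ i, 0 < n 0 i) ∧
      (∀ t : ℝ, 0 ≤ t → ∀ i, HasDerivAt (fun s => n s i)
        ((r i - ∫ α, K i α * L (∑ j, B j α * n t j) ∂P) * n t i) t) ∧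
      Filter.Tendsto n Filter.atTop (𝓝 ntilde)) :
    (∀ i, 0 < ntilde i → ∫ α, K i α * L (∑ j, B j α * ntilde j) ∂P = r i) ∧
    (∀ i, ntilde i = 0 → r i ≤ ∫ α, K i α * L (∑ j, B j α * ntilde j) ∂P) :=
  limit_steady_state_is_ESS_general P L hLC1 r K B hKL1 hBLinf ntilde hsteady hconv
end
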